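/- arXiv:1511.00774 — 5 statements merged into one kernel-verified Lean document; each statement's English description precedes it below -/
import Mathlib

section
/- For all real x and all real y > 0, with z = x + iy, the complex error function admits the integral representation w(z) = (1/√π) ∫₀^{∞} e^{−t²/4} e^{−yt} e^{ixt} dt. -/
/-!
Completing the square, `e^{-z²} e^{-(u - iz)²} = e^{-u² + 2izu}`, so everything reduces to the
shifted half-line Gaussian `G(c) = ∫₀^∞ e^{-(u+c)²} du` at `c = -iz`. Differentiating under the
integral sign, `G'(c) = ∫₀^∞ ∂ᵤ e^{-(u+c)²} du = -e^{-c²}`, and `G(0) = √π/2`; integrating `G'`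
along the segment `[0, c]` gives `G(c) = √π/2 - c ∫₀¹ e^{-(sc)²} ds`. Since `(s · (-iz))² = -(sz)²`,
this yields `w(z) = (2/√π) ∫₀^∞ e^{-u² + 2izu} du` for every `z`, and the substitution `t = 2u`
turns this into the stated formula.
-/

open Real MeasureTheory Set Complex

/-- The complex error function (Faddeeva function):
`w(z) = e^{−z²}(1 + (2i/√π)∫₀^z e^{t²} dt)`, the integral taken along the
straight-line segment from `0` to `z`. -/
noncomputable def faddeeva (z : ℂ) : ℂ :=
  Complex.exp (-z ^ 2) *
    (1 + (2 * Complex.I / (Real.sqrt Real.pi : ℂ)) *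
      (z * ∫ s in (0:ℝ)..1, Complex.exp (((s : ℂ) * z) ^ 2)))

theorem norm_cexp_neg_sq_add_le (u : ℝ) {c : ℂ} {K : ℝ} (hK : ‖c‖ ≤ K) :
    ‖cexp (-(u + c) ^ 2)‖ ≤ rexp (K ^ 2) * rexp (-(1 / 2) * u ^ 2) := by
  have hc : c.re ^ 2 + c.im ^ 2 ≤ K ^ 2 := by
    rw [sq, sq, ← normSq_apply, ← Complex.sq_norm]
    exact pow_le_pow_left₀ (norm_nonneg c) hK 2
  rw [norm_exp, ← Real.exp_add, Real.exp_le_exp]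
  have hre : (-((u : ℂ) + c) ^ 2).re = -(u + c.re) ^ 2 + c.im ^ 2 := by
    simp [pow_two]
    ring
  rw [hre]
  nlinarith [sq_nonneg (u + 2 * c.re)]

theorem norm_mul_cexp_neg_sq_add_le (u : ℝ) {c : ℂ} {K : ℝ} (hK : ‖c‖ ≤ K) :
    ‖(u + c) * cexp (-(u + c) ^ 2)‖ ≤ (|u| + K) * (rexp (K ^ 2) * rexp (-(1 / 2) * u ^ 2)) := by
  rw [norm_mul]
  refine mul_le_mul ?_ (norm_cexp_neg_sq_add_le u hK) (norm_nonneg _)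
    (add_nonneg (abs_nonneg u) ((norm_nonneg c).trans hK))
  exact (norm_add_le _ _).trans (by simpa using hK)

theorem integrable_abs_add_mul_exp_neg_sq (K C : ℝ) :
    Integrable fun u : ℝ => (|u| + K) * (C * rexp (-(1 / 2) * u ^ 2)) := by
  have hgauss := integrable_exp_neg_mul_sq (by norm_num : (0 : ℝ) < 1 / 2)
  have hmoment := (integrable_mul_exp_neg_mul_sq (by norm_num : (0 : ℝ) < 1 / 2)).norm
  refine ((hmoment.const_mul C).add (hgauss.const_mul (K * C))).congr (ae_of_all _ fun u ↦ ?_)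
  simp only [Pi.add_apply, norm_mul, Real.norm_eq_abs, abs_of_pos (Real.exp_pos _)]
  ring

theorem integrable_cexp_neg_sq_add (c : ℂ) : Integrable fun u : ℝ => cexp (-(u + c) ^ 2) :=
  ((integrable_exp_neg_mul_sq (by norm_num : (0 : ℝ) < 1 / 2)).const_mul _).mono'
    (by fun_prop) (ae_of_all _ fun u ↦ norm_cexp_neg_sq_add_le u le_rfl)

theorem integrable_mul_cexp_neg_sq_add (c : ℂ) :
    Integrable fun u : ℝ => (u + c) * cexp (-(u + c) ^ 2) :=
  (integrable_abs_add_mul_exp_neg_sq ‖c‖ _).mono'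
    (by fun_prop) (ae_of_all _ fun u ↦ norm_mul_cexp_neg_sq_add_le u le_rfl)

theorem hasDerivAt_cexp_neg_sq (w : ℂ) :
    HasDerivAt (fun w : ℂ ↦ cexp (-w ^ 2)) (-2 * w * cexp (-w ^ 2)) w :=
  (hasDerivAt_pow 2 w).fun_neg.cexp.congr_deriv (by push_cast; ring)

theorem integral_Ioi_mul_cexp_neg_sq_add (c : ℂ) :
    ∫ u in Ioi (0 : ℝ), -2 * (u + c) * cexp (-(u + c) ^ 2) = -cexp (-c ^ 2) := by
  have hderiv : ∀ u : ℝ, HasDerivAt (fun u : ℝ ↦ cexp (-(u + c) ^ 2))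
      (-2 * (u + c) * cexp (-(u + c) ^ 2)) u :=
    fun u ↦ ((hasDerivAt_cexp_neg_sq _).comp_add_const _ c).comp_ofReal
  have hint : IntegrableOn (fun u : ℝ ↦ -2 * (u + c) * cexp (-(u + c) ^ 2)) (Ioi 0) := by
    simpa only [mul_assoc] using ((integrable_mul_cexp_neg_sq_add c).const_mul (-2)).integrableOn
  have hlim := tendsto_zero_of_hasDerivAt_of_integrableOn_Ioi (fun u _ ↦ hderiv u) hint
    (integrable_cexp_neg_sq_add c).integrableOn
  simpa using integral_Ioi_of_hasDerivAt_of_tendsto' (a := 0) (fun u _ ↦ hderiv u) hint hlim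

/-- This is `(√π / 2) · erfc c`. -/
noncomputable def shiftedGaussianIntegral (c : ℂ) : ℂ :=
  ∫ u in Ioi (0 : ℝ), cexp (-(u + c) ^ 2)

theorem shiftedGaussianIntegral_zero : shiftedGaussianIntegral 0 = √π / 2 := by
  have h := integral_gaussian_Ioi 1
  simp only [neg_mul, one_mul, div_one] at h
  simp only [shiftedGaussianIntegral, add_zero, ← ofReal_pow, ← ofReal_neg, ← ofReal_exp]
  rw [integral_complex_ofReal, h, ofReal_div, ofReal_ofNat]

theorem hasDerivAt_shiftedGaussianIntegral (c : ℂ) :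
    HasDerivAt shiftedGaussianIntegral (-cexp (-c ^ 2)) c := by
  set K := ‖c‖ + 1
  have hK : ∀ c' ∈ Metric.ball c 1, ‖c'‖ ≤ K := fun c' hc' ↦ by
    have := norm_le_norm_add_norm_sub' c' c
    have := mem_ball_iff_norm.mp hc'
    linarith
  have h := hasDerivAt_integral_of_dominated_loc_of_deriv_le (μ := volume.restrict (Ioi 0))
    (F := fun (c : ℂ) (u : ℝ) ↦ cexp (-(u + c) ^ 2))
    (F' := fun (c : ℂ) (u : ℝ) ↦ -2 * (u + c) * cexp (-(u + c) ^ 2))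
    (bound := fun u ↦ 2 * ((|u| + K) * (rexp (K ^ 2) * rexp (-(1 / 2) * u ^ 2))))
    (Metric.ball_mem_nhds c one_pos) (.of_forall fun _ ↦ by fun_prop)
    (integrable_cexp_neg_sq_add c).integrableOn (by fun_prop)
    (ae_of_all _ fun u c' hc' ↦ ?_)
    ((integrable_abs_add_mul_exp_neg_sq K _).const_mul 2).integrableOn
    (ae_of_all _ fun u c' _ ↦ (hasDerivAt_cexp_neg_sq _).comp_const_add (u : ℂ) c')
  · have h := h.2
    rwa [integral_Ioi_mul_cexp_neg_sq_add] at h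
  · rw [mul_assoc, norm_mul]
    simpa using mul_le_mul_of_nonneg_left (norm_mul_cexp_neg_sq_add_le u (hK c' hc'))
      zero_le_two

theorem shiftedGaussianIntegral_eq (c : ℂ) :
    shiftedGaussianIntegral c = √π / 2 - c * ∫ s in (0 : ℝ)..1, cexp (-(s * c) ^ 2) := by
  have hderiv : ∀ s : ℝ, HasDerivAt (fun s : ℝ ↦ shiftedGaussianIntegral (s * c))
      (-cexp (-(s * c) ^ 2) * c) s := fun s ↦
    ((hasDerivAt_shiftedGaussianIntegral _).comp (s : ℂ) (hasDerivAt_mul_const c)).comp_ofReal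
  have hftc := intervalIntegral.integral_eq_sub_of_hasDerivAt (fun s _ ↦ hderiv s)
    (Continuous.intervalIntegrable (by fun_prop) 0 1)
  simp only [intervalIntegral.integral_mul_const, intervalIntegral.integral_neg, ofReal_one,
    one_mul, ofReal_zero, zero_mul, shiftedGaussianIntegral_zero] at hftc
  linear_combination -hftc

theorem faddeeva_eq_integral_Ioi (z : ℂ) :
    faddeeva z = 2 / √π * ∫ u in Ioi (0 : ℝ), cexp (-u ^ 2 + 2 * I * z * u) := by
  have hsq : ∀ u : ℝ, cexp (-u ^ 2 + 2 * I * z * u) = cexp (-z ^ 2) * cexp (-(u + -I * z) ^ 2) :=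
    fun u ↦ by rw [← Complex.exp_add]; ring_nf; simp [I_sq]
  have hseg : ∀ s : ℝ, cexp (-(s * (-I * z)) ^ 2) = cexp ((s * z) ^ 2) :=
    fun s ↦ by ring_nf; simp [I_sq]
  have hpi : (√π : ℂ) ≠ 0 := ofReal_ne_zero.mpr (Real.sqrt_pos.mpr pi_pos).ne'
  simp_rw [hsq, integral_const_mul]
  rw [← shiftedGaussianIntegral, shiftedGaussianIntegral_eq, faddeeva]
  simp_rw [hseg]
  field_simp
  ring

theorem faddeeva_integral_rep_general (x y : ℝ) :
    faddeeva ((x : ℂ) + Complex.I * (y : ℂ)) =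
      (1 / (Real.sqrt Real.pi : ℂ)) *
        ∫ t in Set.Ioi (0:ℝ),
          Complex.exp (-(t : ℂ) ^ 2 / 4) * Complex.exp (-(y : ℂ) * (t : ℂ)) *
            Complex.exp (Complex.I * (x : ℂ) * (t : ℂ)) := by
  set z : ℂ := x + I * y
  set g : ℝ → ℂ := fun u ↦ cexp (-u ^ 2 + 2 * I * z * u)
  have hintegrand : ∀ t : ℝ, cexp (-t ^ 2 / 4) * cexp (-y * t) * cexp (I * x * t) = g (1 / 2 * t) :=
    fun t ↦ by simp only [g, z, ← Complex.exp_add]; push_cast; ring_nf; simp [I_sq]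
  have hscale : ∫ t in Ioi (0 : ℝ), g (1 / 2 * t) = 2 * ∫ u in Ioi (0 : ℝ), g u := by
    rw [integral_comp_mul_left_Ioi g 0 (by norm_num : (0 : ℝ) < 1 / 2)]
    norm_num
  simp_rw [hintegrand, hscale, faddeeva_eq_integral_Ioi]
  ring

/-- For all real `x` and real `y > 0`, with `z = x + iy`,
`w(z) = (1/√π) ∫₀^{∞} e^{−t²/4} e^{−yt} e^{ixt} dt`. -/
theorem faddeeva_integral_rep (x y : ℝ) (hy : 0 < y) :
    faddeeva ((x : ℂ) + Complex.I * (y : ℂ)) =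
      (1 / (Real.sqrt Real.pi : ℂ)) *
        ∫ t in Set.Ioi (0:ℝ),
          Complex.exp (-(t : ℂ) ^ 2 / 4) * Complex.exp (-(y : ℂ) * (t : ℂ)) *
            Complex.exp (Complex.I * (x : ℂ) * (t : ℂ)) :=
  faddeeva_integral_rep_general x y
end

section
/- For all real x and all real y > 0, the real part of the complex error function at z = x + iy equals the Voigt function: Re[w(x + iy)] = (y/π) ∫_{−∞}^{∞} e^{−t²}/(y² + (x − t)²) dt. -/
/-!
On the upper half-plane `√π w(z) = ∫₀^∞ e^{-s²/4 + izs} ds`: both sides are holomorphic there and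
agree on the imaginary axis, where completing the square reduces both to `e^{y²} erfc y`. Writing
`√π e^{-s²/4}` as the Fourier transform of `e^{-t²}` and exchanging the two integrals turns this
into `w(z) = (i/π) ∫ e^{-t²} / (z - t) dt`, whose real part at `z = x + iy` is the Voigt integral.
-/

open Real MeasureTheory

open Set Filter Topology Complex

noncomputable def halfLineGaussFourier (z : ℂ) : ℂ :=
  ∫ s in Ioi (0 : ℝ), cexp (-(s : ℂ) ^ 2 / 4 + I * z * s)

lemma norm_cexp_neg_sq_div_four_add_I_mul (z : ℂ) (s : ℝ) :
    ‖cexp (-(s : ℂ) ^ 2 / 4 + I * z * s)‖ = rexp (-s ^ 2 / 4 - z.im * s) := by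
  rw [Complex.norm_exp]
  congr 1
  simp [← ofReal_pow]
  ring

lemma integrableOn_cexp_neg_sq_div_four_add_I_mul {z : ℂ} (hz : 0 ≤ z.im) :
    IntegrableOn (fun s : ℝ => cexp (-(s : ℂ) ^ 2 / 4 + I * z * s)) (Ioi 0) := by
  refine (integrable_exp_neg_mul_sq (b := 1 / 4) (by norm_num)).integrableOn.mono'
    (by fun_prop : Continuous _).aestronglyMeasurable.restrict ?_
  filter_upwards [ae_restrict_mem measurableSet_Ioi] with s (hs : 0 < s)
  rw [norm_cexp_neg_sq_div_four_add_I_mul]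
  gcongr
  nlinarith [mul_nonneg hz hs.le]

lemma differentiableOn_halfLineGaussFourier :
    DifferentiableOn ℂ halfLineGaussFourier {z | 0 < z.im} := by
  have hU : IsOpen {z : ℂ | 0 < z.im} := isOpen_lt continuous_const continuous_im
  intro z₀ hz₀
  refine DifferentiableAt.differentiableWithinAt (hasDerivAt_integral_of_dominated_loc_of_deriv_le
    (F := fun z (s : ℝ) => cexp (-(s : ℂ) ^ 2 / 4 + I * z * s))
    (F' := fun z (s : ℝ) => I * s * cexp (-(s : ℂ) ^ 2 / 4 + I * z * s))
    (bound := fun s => s * rexp (-(1 / 4) * s ^ 2)) (hU.mem_nhds hz₀)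
    (Eventually.of_forall fun z => (by fun_prop : Continuous _).aestronglyMeasurable.restrict)
    (integrableOn_cexp_neg_sq_div_four_add_I_mul hz₀.le)
    (by fun_prop : Continuous _).aestronglyMeasurable.restrict ?_
    (integrable_mul_exp_neg_mul_sq (by norm_num)).integrableOn ?_).2.differentiableAt
  · filter_upwards [ae_restrict_mem measurableSet_Ioi] with s (hs : 0 < s) z (hz : 0 < z.im)
    rw [norm_mul, norm_cexp_neg_sq_div_four_add_I_mul, norm_mul, norm_I, one_mul, norm_real,
      Real.norm_of_nonneg hs.le]
    gcongr
    nlinarith [mul_pos hz hs]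
  · refine Eventually.of_forall fun s z _ => ?_
    have := ((((hasDerivAt_id z).const_mul I).mul_const (s : ℂ)).const_add
      (-(s : ℂ) ^ 2 / 4)).cexp
    simpa [mul_comm] using this

lemma differentiable_intervalIntegral_cexp_sq :
    Differentiable ℂ fun z : ℂ => ∫ s in (0 : ℝ)..1, cexp (((s : ℂ) * z) ^ 2) := by
  intro z₀
  set R := ‖z₀‖ + 1
  refine (intervalIntegral.hasDerivAt_integral_of_dominated_loc_of_deriv_le
    (F := fun z (s : ℝ) => cexp (((s : ℂ) * z) ^ 2))
    (F' := fun z (s : ℝ) => cexp (((s : ℂ) * z) ^ 2) * (2 * ((s : ℂ) * z) * s))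
    (bound := fun _ => rexp (R ^ 2) * (2 * R)) (Metric.ball_mem_nhds z₀ one_pos)
    (Eventually.of_forall fun z => (by fun_prop : Continuous _).aestronglyMeasurable.restrict)
    ((by fun_prop : Continuous _).intervalIntegrable 0 1)
    (by fun_prop : Continuous _).aestronglyMeasurable.restrict ?_
    intervalIntegrable_const ?_).2.differentiableAt
  · refine Eventually.of_forall fun s hs z hz => ?_
    rw [uIoc_of_le zero_le_one] at hs
    have hsz : ‖(s : ℂ) * z‖ ≤ R := by
      rw [norm_mul, norm_real, Real.norm_of_nonneg hs.1.le]
      have hzR : ‖z‖ ≤ R := by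
        rw [mem_ball_iff_norm] at hz
        linarith [norm_le_norm_add_norm_sub' z z₀]
      nlinarith [hs.2, norm_nonneg z]
    have hexp : ‖cexp (((s : ℂ) * z) ^ 2)‖ ≤ rexp (R ^ 2) :=
      (norm_exp_le_exp_norm _).trans (by rw [norm_pow]; gcongr)
    have hlin : ‖2 * ((s : ℂ) * z) * s‖ ≤ 2 * R := by
      rw [norm_mul, norm_mul, norm_real, Real.norm_of_nonneg hs.1.le, RCLike.norm_ofNat]
      nlinarith [hs.2, norm_nonneg ((s : ℂ) * z)]
    rw [norm_mul]
    gcongr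
  · refine Eventually.of_forall fun s _ z _ => ?_
    exact (((hasDerivAt_id z).const_mul (s : ℂ)).pow 2).cexp.congr_deriv (by simp [mul_comm])

lemma differentiable_faddeeva : Differentiable ℂ faddeeva := by
  unfold faddeeva
  have := differentiable_intervalIntegral_cexp_sq
  fun_prop

lemma integral_comp_add_right_Ioi {E : Type*} [NormedAddCommGroup E] [NormedSpace ℝ E]
    (f : ℝ → E) (a c : ℝ) : ∫ x in Ioi a, f (x + c) = ∫ x in Ioi (a + c), f x := by
  have := (measurableEmbedding_addRight c).setIntegral_map (μ := volume) f (Ioi (a + c))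
  rw [map_add_right_eq_self] at this
  simpa [preimage_add_const_Ioi] using this.symm

lemma integral_Ioi_exp_neg_sq_div_four_sub_mul {y : ℝ} (hy : 0 ≤ y) :
    ∫ s in Ioi (0 : ℝ), rexp (-s ^ 2 / 4 - y * s) =
      rexp (y ^ 2) * (√π - 2 * ∫ u in (0 : ℝ)..y, rexp (-u ^ 2)) := by
  have hgauss : ∫ u in Ioi (0 : ℝ), rexp (-u ^ 2) = √π / 2 := by
    simpa using integral_gaussian_Ioi 1
  have hint : Integrable fun u : ℝ => rexp (-u ^ 2) := by
    simpa using integrable_exp_neg_mul_sq one_pos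
  calc ∫ s in Ioi (0 : ℝ), rexp (-s ^ 2 / 4 - y * s)
      = ∫ s in Ioi (0 : ℝ), rexp (y ^ 2) * rexp (-(s * (1 / 2) + y) ^ 2) := by
        congr 1 with s
        rw [← Real.exp_add]
        ring_nf
    _ = rexp (y ^ 2) * (2 * ∫ u in Ioi y, rexp (-u ^ 2)) := by
        rw [integral_const_mul, integral_comp_mul_right_Ioi (fun u => rexp (-(u + y) ^ 2)) 0
          one_half_pos, zero_mul, integral_comp_add_right_Ioi (fun u => rexp (-u ^ 2)), zero_add]
        norm_num
    _ = rexp (y ^ 2) * (√π - 2 * ∫ u in (0 : ℝ)..y, rexp (-u ^ 2)) := by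
        rw [← intervalIntegral.integral_Ioi_sub_Ioi hint.integrableOn hy, hgauss]
        ring

lemma faddeeva_I_mul (y : ℝ) :
    faddeeva (I * y) = ↑(rexp (y ^ 2) * (1 - 2 / √π * ∫ u in (0 : ℝ)..y, rexp (-u ^ 2))) := by
  have hsub : y * ∫ s in (0 : ℝ)..1, rexp (-(y * s) ^ 2) = ∫ u in (0 : ℝ)..y, rexp (-u ^ 2) := by
    simpa using intervalIntegral.mul_integral_comp_mul_left (a := 0) (b := 1)
      (f := fun u => rexp (-u ^ 2)) y
  have hcast : (∫ s in (0 : ℝ)..1, cexp (((s : ℂ) * (I * y)) ^ 2)) =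
      ↑(∫ s in (0 : ℝ)..1, rexp (-(y * s) ^ 2)) := by
    rw [← intervalIntegral.integral_ofReal]
    congr 1 with s
    push_cast
    congr 1
    linear_combination ((s : ℂ) * y) ^ 2 * I_sq
  rw [faddeeva, hcast, ← hsub]
  generalize ∫ s in (0 : ℝ)..1, rexp (-(y * s) ^ 2) = A
  push_cast
  rw [show -(I * (y : ℂ)) ^ 2 = (y : ℂ) ^ 2 by linear_combination -(y : ℂ) ^ 2 * I_sq]
  linear_combination (cexp ((y : ℂ) ^ 2) * 2 / √π * y * A) * I_sq

lemma halfLineGaussFourier_I_mul (y : ℝ) :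
    halfLineGaussFourier (I * y) = ↑(∫ s in Ioi (0 : ℝ), rexp (-s ^ 2 / 4 - y * s)) := by
  rw [halfLineGaussFourier, ← integral_complex_ofReal]
  congr 1 with s
  push_cast
  congr 1
  linear_combination ((y : ℂ) * s) * I_sq

lemma sqrt_pi_mul_faddeeva_I_mul {y : ℝ} (hy : 0 ≤ y) :
    √π * faddeeva (I * y) = halfLineGaussFourier (I * y) := by
  rw [faddeeva_I_mul, halfLineGaussFourier_I_mul, integral_Ioi_exp_neg_sq_div_four_sub_mul hy]
  have : √π ≠ 0 := (Real.sqrt_pos.2 pi_pos).ne'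
  norm_cast
  field_simp

lemma tendsto_I_mul_nhdsNE_one : Tendsto (fun y : ℝ => I * y) (𝓝[≠] 1) (𝓝[≠] I) := by
  have hcont : ContinuousWithinAt (fun y : ℝ => I * y) {1}ᶜ 1 := by fun_prop
  simpa using hcont.tendsto_nhdsWithin (t := {I}ᶜ) fun y hy => by
    simpa [mul_eq_left₀ I_ne_zero] using hy

lemma sqrt_pi_mul_faddeeva {z : ℂ} (hz : 0 < z.im) : √π * faddeeva z = halfLineGaussFourier z := by
  have hU : IsOpen {z : ℂ | 0 < z.im} := isOpen_lt continuous_const continuous_im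
  have hpos : ∀ᶠ y : ℝ in 𝓝[≠] 1, 0 ≤ y :=
    nhdsWithin_le_nhds (eventually_ge_nhds one_pos)
  refine AnalyticOnNhd.eqOn_of_preconnected_of_frequently_eq
    ((differentiable_faddeeva.const_mul _).differentiableOn.analyticOnNhd hU)
    (differentiableOn_halfLineGaussFourier.analyticOnNhd hU)
    (convex_halfSpace_im_gt 0).isPreconnected (by simp : (0 : ℝ) < I.im)
    (tendsto_I_mul_nhdsNE_one.frequently (hpos.mono fun y hy => ?_).frequently) hz
  exact sqrt_pi_mul_faddeeva_I_mul hy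

lemma sqrt_pi_mul_cexp_neg_sq_div_four (s : ℝ) :
    √π * cexp (-(s : ℂ) ^ 2 / 4) = ∫ t : ℝ, cexp (-(t : ℂ) ^ 2) * cexp (-I * s * t) := by
  have hsqrt : ((π : ℂ) / 1) ^ (1 / 2 : ℂ) = √π := by
    rw [div_one, Real.sqrt_eq_rpow, ofReal_cpow pi_pos.le]
    norm_num
  have := fourierIntegral_gaussian (b := 1) (by simp) (-s)
  rw [hsqrt] at this
  simp_rw [mul_comm (cexp (-(_ : ℂ) ^ 2))]
  simpa using this.symm

lemma integral_Ioi_cexp_I_mul {w : ℂ} (hw : 0 < w.im) :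
    ∫ s in Ioi (0 : ℝ), cexp (I * w * s) = I / w := by
  have hw0 : w ≠ 0 := fun h => by simp [h] at hw
  rw [integral_exp_mul_complex_Ioi (by simpa using hw), ofReal_zero, mul_zero, Complex.exp_zero]
  field_simp
  rw [I_sq]

lemma sqrt_pi_mul_halfLineGaussFourier {z : ℂ} (hz : 0 < z.im) :
    √π * halfLineGaussFourier z = I * ∫ t : ℝ, cexp (-(t : ℂ) ^ 2) / (z - t) := by
  have hint : Integrable (fun p : ℝ × ℝ => cexp (-(p.2 : ℂ) ^ 2) * cexp (I * (z - p.2) * p.1))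
      ((volume.restrict (Ioi 0)).prod volume) := by
    refine ((exp_neg_integrableOn_Ioi 0 hz).mul_prod
      (integrable_exp_neg_mul_sq one_pos)).mono' (by fun_prop : Continuous _).aestronglyMeasurable
      (Eventually.of_forall fun p => ?_)
    rw [norm_mul, Complex.norm_exp, Complex.norm_exp, mul_comm]
    simp [← ofReal_pow]
  calc √π * halfLineGaussFourier z
      = ∫ s in Ioi (0 : ℝ), ∫ t : ℝ, cexp (-(t : ℂ) ^ 2) * cexp (I * (z - t) * s) := by
        rw [halfLineGaussFourier, ← integral_const_mul]
        congr 1 with s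
        rw [Complex.exp_add, ← mul_assoc, sqrt_pi_mul_cexp_neg_sq_div_four, ← integral_mul_const]
        congr 1 with t
        simp only [mul_assoc, ← Complex.exp_add]
        ring_nf
    _ = ∫ t : ℝ, ∫ s in Ioi (0 : ℝ), cexp (-(t : ℂ) ^ 2) * cexp (I * (z - t) * s) :=
        integral_integral_swap hint
    _ = I * ∫ t : ℝ, cexp (-(t : ℂ) ^ 2) / (z - t) := by
        rw [← integral_const_mul]
        congr 1 with t
        rw [integral_const_mul, integral_Ioi_cexp_I_mul (by simpa using hz), mul_div_left_comm]

lemma faddeeva_eq_I_div_pi_mul_integral {z : ℂ} (hz : 0 < z.im) :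
    faddeeva z = I / π * ∫ t : ℝ, cexp (-(t : ℂ) ^ 2) / (z - t) := by
  have hsqrt : (√π : ℂ) * √π = π := by exact_mod_cast Real.mul_self_sqrt pi_pos.le
  have h := sqrt_pi_mul_halfLineGaussFourier hz
  rw [← sqrt_pi_mul_faddeeva hz, ← mul_assoc, hsqrt] at h
  rw [div_mul_eq_mul_div, ← h, mul_div_cancel_left₀ _ (ofReal_ne_zero.2 pi_ne_zero)]

lemma integrable_cexp_neg_sq_div_sub {z : ℂ} (hz : 0 < z.im) :
    Integrable fun t : ℝ => cexp (-(t : ℂ) ^ 2) / (z - t) := by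
  have hne : ∀ t : ℝ, z - t ≠ 0 := fun t h =>
    hz.ne' (by simpa using congrArg im (sub_eq_zero.1 h))
  refine ((integrable_exp_neg_mul_sq one_pos).div_const z.im).mono'
    ((by fun_prop : Continuous _).div (by fun_prop) hne).aestronglyMeasurable
    (Eventually.of_forall fun t => ?_)
  have him : z.im ≤ ‖z - t‖ := by simpa using (le_abs_self _).trans (z - t).abs_im_le_norm
  rw [norm_div, Complex.norm_exp]
  gcongr
  simp [← ofReal_pow]

lemma im_cexp_neg_sq_div_sub (x y t : ℝ) :
    (cexp (-(t : ℂ) ^ 2) / ((x : ℂ) + I * y - t)).im =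
      -(y * (rexp (-t ^ 2) / (y ^ 2 + (x - t) ^ 2))) := by
  have hcast : cexp (-(t : ℂ) ^ 2) = (rexp (-t ^ 2) : ℂ) := by push_cast; rfl
  rw [hcast, div_im]
  simp [normSq_apply, -ofReal_exp]
  ring

/-- For all real `x` and real `y > 0`, the real part of the complex error
function at `z = x + iy` equals the Voigt function:
`Re[w(x + iy)] = (y/π) ∫_{−∞}^{∞} e^{−t²}/(y² + (x − t)²) dt`. -/
theorem re_faddeeva_eq_voigt (x y : ℝ) (hy : 0 < y) :
    (faddeeva ((x : ℂ) + Complex.I * (y : ℂ))).re =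
      (y / Real.pi) * ∫ t : ℝ, Real.exp (-t ^ 2) / (y ^ 2 + (x - t) ^ 2) := by
  have hz : 0 < ((x : ℂ) + I * y).im := by simpa using hy
  calc (faddeeva ((x : ℂ) + I * y)).re
      = -(∫ t : ℝ, cexp (-(t : ℂ) ^ 2) / ((x : ℂ) + I * y - t)).im / π := by
        rw [faddeeva_eq_I_div_pi_mul_integral hz]
        simp [div_re, div_im]
        ring
    _ = -(∫ t : ℝ, (cexp (-(t : ℂ) ^ 2) / ((x : ℂ) + I * y - t)).im) / π := by
        simpa using congrArg (fun r => -r / π) (integral_im (integrable_cexp_neg_sq_div_sub hz)).symm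
    _ = (y / π) * ∫ t : ℝ, rexp (-t ^ 2) / (y ^ 2 + (x - t) ^ 2) := by
        simp_rw [im_cexp_neg_sq_div_sub]
        rw [integral_neg, integral_const_mul]
        ring
end

section
/- For every real x, the complex probability function W(x,y) = (i/π) ∫_{−∞}^{∞} e^{−t²}/((x + iy) − t) dt tends, as y → 0⁺, to e^{−x²} + (2i/√π)·daw(x), where daw is Dawson's integral. -/
open Real MeasureTheory Filter

/-- Dawson's integral for real `x`: `daw(x) = e^{−x²} ∫₀^x e^{t²} dt`. -/
noncomputable def dawson (x : ℝ) : ℝ :=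
  Real.exp (-x ^ 2) * ∫ t in (0:ℝ)..x, Real.exp (t ^ 2)

/-!
Since `1 / (x + iy - t) = ((x - t) - iy) / ((x - t)² + y²)`, the integral splits into a Poisson
and a conjugate Poisson integral of the Gaussian. Substituting `t = x + ys` turns the first into
`∫ e^{-(x+ys)²} / (1 + s²) ds`, which tends to `π e^{-x²}` by dominated convergence. Pairing
`t = x ∓ u` turns the second into `½ ∫ (e^{-(x-u)²} - e^{-(x+u)²}) / u · u² / (u² + y²) du`, which
tends to `e^{-x²} ∫ e^{-u²} sinh(2xu) / u du`; differentiating under the integral sign in `x` (the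
derivative is a shifted Gaussian integral, `2√π e^{x²}`) identifies this with `2√π daw(x)`.
-/

open Set Topology

theorem abs_sinh_le_abs_mul_cosh (t : ℝ) : |sinh t| ≤ |t| * cosh t := by
  have hcosh : ∀ s ∈ Icc (-|t|) |t|, ‖cosh s‖ ≤ cosh t := fun s hs => by
    rw [norm_of_nonneg (cosh_pos s).le, cosh_le_cosh]
    exact abs_le.2 hs
  have h0 : (0 : ℝ) ∈ Icc (-|t|) |t| := ⟨neg_nonpos.2 (abs_nonneg t), abs_nonneg t⟩
  simpa [mul_comm] using (convex_Icc (-|t|) |t|).norm_image_sub_le_of_norm_hasDerivWithin_le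
    (fun s _ => (hasDerivAt_sinh s).hasDerivWithinAt) hcosh h0 (abs_le.1 le_rfl)

theorem abs_sinh_mul_div_le (c u : ℝ) : |sinh (c * u) / u| ≤ |c| * cosh (c * u) := by
  rcases eq_or_ne u 0 with rfl | hu
  · simp
  rw [abs_div, div_le_iff₀ (abs_pos.2 hu)]
  calc |sinh (c * u)| ≤ |c * u| * cosh (c * u) := abs_sinh_le_abs_mul_cosh _
    _ = |c| * cosh (c * u) * |u| := by rw [abs_mul]; ring

theorem integrable_exp_neg_sq : Integrable fun u : ℝ => exp (-u ^ 2) := by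
  simpa using integrable_exp_neg_mul_sq one_pos

theorem integral_exp_neg_sq : ∫ u : ℝ, exp (-u ^ 2) = √π := by
  simpa using integral_gaussian 1

theorem exp_neg_sq_mul_exp_two_mul (a u : ℝ) :
    exp (-u ^ 2) * exp (2 * a * u) = exp (a ^ 2) * exp (-(u - a) ^ 2) := by
  rw [← exp_add, ← exp_add]
  ring_nf

theorem integrable_exp_neg_sq_mul_exp_two_mul (a : ℝ) :
    Integrable fun u : ℝ => exp (-u ^ 2) * exp (2 * a * u) := by
  simp_rw [exp_neg_sq_mul_exp_two_mul]
  exact (integrable_exp_neg_sq.comp_sub_right a).const_mul _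

theorem integral_exp_neg_sq_mul_exp_two_mul (a : ℝ) :
    ∫ u : ℝ, exp (-u ^ 2) * exp (2 * a * u) = √π * exp (a ^ 2) := by
  simp_rw [exp_neg_sq_mul_exp_two_mul]
  rw [integral_const_mul, integral_sub_right_eq_self (fun u => exp (-u ^ 2)) a,
    integral_exp_neg_sq, mul_comm]

theorem exp_neg_sq_mul_cosh (a u : ℝ) : exp (-u ^ 2) * cosh (2 * a * u) =
    (exp (-u ^ 2) * exp (2 * a * u) + exp (-u ^ 2) * exp (2 * -a * u)) / 2 := by
  rw [cosh_eq]
  ring_nf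

theorem integrable_exp_neg_sq_mul_cosh (a : ℝ) :
    Integrable fun u : ℝ => exp (-u ^ 2) * cosh (2 * a * u) := by
  simp_rw [exp_neg_sq_mul_cosh]
  exact ((integrable_exp_neg_sq_mul_exp_two_mul a).add
    (integrable_exp_neg_sq_mul_exp_two_mul (-a))).div_const 2

theorem integral_exp_neg_sq_mul_cosh (a : ℝ) :
    ∫ u : ℝ, exp (-u ^ 2) * cosh (2 * a * u) = √π * exp (a ^ 2) := by
  simp_rw [exp_neg_sq_mul_cosh]
  rw [integral_div, integral_add (integrable_exp_neg_sq_mul_exp_two_mul a)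
    (integrable_exp_neg_sq_mul_exp_two_mul (-a)), integral_exp_neg_sq_mul_exp_two_mul,
    integral_exp_neg_sq_mul_exp_two_mul, neg_sq]
  ring

theorem integrable_exp_neg_sq_mul_sinh_div (x : ℝ) :
    Integrable fun u : ℝ => exp (-u ^ 2) * (sinh (2 * x * u) / u) := by
  refine ((integrable_exp_neg_sq_mul_cosh x).const_mul |2 * x|).mono'
    (Measurable.aestronglyMeasurable (by fun_prop)) (Eventually.of_forall fun u => ?_)
  rw [norm_mul, norm_of_nonneg (exp_pos _).le, Real.norm_eq_abs, mul_left_comm]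
  exact mul_le_mul_of_nonneg_left (abs_sinh_mul_div_le _ _) (exp_pos _).le

theorem hasDerivAt_integral_exp_neg_sq_mul_sinh_div (x₀ : ℝ) :
    HasDerivAt (fun x => ∫ u : ℝ, exp (-u ^ 2) * (sinh (2 * x * u) / u))
      (2 * √π * exp (x₀ ^ 2)) x₀ := by
  have hbound : ∀ u, ∀ x ∈ Metric.ball x₀ 1, ‖2 * (exp (-u ^ 2) * cosh (2 * x * u))‖ ≤
      2 * (exp (-u ^ 2) * cosh (2 * (|x₀| + 1) * u)) := fun u x hball => by
    have hx : |x| ≤ |x₀| + 1 := by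
      have := abs_sub_abs_le_abs_sub x x₀
      rw [Metric.mem_ball, Real.dist_eq] at hball
      linarith
    rw [norm_of_nonneg (by positivity)]
    gcongr
    rw [cosh_le_cosh, abs_mul, abs_mul (2 * _), abs_mul, abs_mul 2,
      abs_of_nonneg (by positivity : 0 ≤ |x₀| + 1)]
    gcongr
  -- only a.e.: at `u = 0` the integrand is the junk value `sinh 0 / 0 = 0` for every `x`
  have hderiv : ∀ᵐ u : ℝ, ∀ x ∈ Metric.ball x₀ 1,
      HasDerivAt (fun x => exp (-u ^ 2) * (sinh (2 * x * u) / u))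
        (2 * (exp (-u ^ 2) * cosh (2 * x * u))) x := by
    filter_upwards [Measure.ae_ne volume 0] with u hu x _
    have hsinh := ((((hasDerivAt_id x).const_mul (2 : ℝ)).mul_const u).sinh.div_const u).const_mul
      (exp (-u ^ 2))
    refine hsinh.congr_deriv ?_
    simp only [id]
    field_simp
  have hleibniz := hasDerivAt_integral_of_dominated_loc_of_deriv_le
    (Metric.ball_mem_nhds x₀ one_pos)
    (Eventually.of_forall fun x => (integrable_exp_neg_sq_mul_sinh_div x).aestronglyMeasurable)
    (integrable_exp_neg_sq_mul_sinh_div x₀)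
    ((integrable_exp_neg_sq_mul_cosh x₀).const_mul 2).aestronglyMeasurable
    (Eventually.of_forall hbound) ((integrable_exp_neg_sq_mul_cosh _).const_mul 2) hderiv
  rw [integral_const_mul, integral_exp_neg_sq_mul_cosh, ← mul_assoc] at hleibniz
  exact hleibniz.2

theorem integral_exp_neg_sq_mul_sinh_div (x : ℝ) :
    ∫ u : ℝ, exp (-u ^ 2) * (sinh (2 * x * u) / u) = 2 * √π * ∫ s in (0 : ℝ)..x, exp (s ^ 2) := by
  rw [← intervalIntegral.integral_const_mul, intervalIntegral.integral_eq_sub_of_hasDerivAt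
    (fun s _ => hasDerivAt_integral_exp_neg_sq_mul_sinh_div s)
    (Continuous.intervalIntegrable (by fun_prop) _ _)]
  simp

theorem exp_neg_sq_sub_sub_exp_neg_sq_add (x u : ℝ) :
    exp (-(x - u) ^ 2) - exp (-(x + u) ^ 2) =
      2 * exp (-x ^ 2) * (exp (-u ^ 2) * sinh (2 * x * u)) := by
  rw [sinh_eq, show -(x - u) ^ 2 = -x ^ 2 + -u ^ 2 + 2 * x * u by ring,
    show -(x + u) ^ 2 = -x ^ 2 + -u ^ 2 + -(2 * x * u) by ring, exp_add, exp_add, exp_add, exp_add]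
  ring

theorem exp_neg_sq_sub_sub_exp_neg_sq_add_div (x : ℝ) :
    (fun u => (exp (-(x - u) ^ 2) - exp (-(x + u) ^ 2)) / u) =
      fun u => 2 * exp (-x ^ 2) * (exp (-u ^ 2) * (sinh (2 * x * u) / u)) := by
  ext u
  rw [exp_neg_sq_sub_sub_exp_neg_sq_add, mul_div_assoc, mul_div_assoc]

theorem integrable_exp_neg_sq_sub_sub_exp_neg_sq_add_div (x : ℝ) :
    Integrable fun u => (exp (-(x - u) ^ 2) - exp (-(x + u) ^ 2)) / u := by
  rw [exp_neg_sq_sub_sub_exp_neg_sq_add_div]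
  exact (integrable_exp_neg_sq_mul_sinh_div x).const_mul _

theorem integral_exp_neg_sq_sub_sub_exp_neg_sq_add_div (x : ℝ) :
    ∫ u, (exp (-(x - u) ^ 2) - exp (-(x + u) ^ 2)) / u = 4 * √π * dawson x := by
  rw [exp_neg_sq_sub_sub_exp_neg_sq_add_div, integral_const_mul, integral_exp_neg_sq_mul_sinh_div,
    dawson]
  ring

theorem abs_div_sq_add_sq_le (a : ℝ) {y : ℝ} (hy : y ≠ 0) : |a / (a ^ 2 + y ^ 2)| ≤ |y|⁻¹ := by
  have hd : 0 < a ^ 2 + y ^ 2 := by positivity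
  rw [abs_div, abs_of_pos hd, div_le_iff₀ hd, inv_mul_eq_div, le_div_iff₀ (abs_pos.2 hy)]
  nlinarith [sq_nonneg (|a| - |y|), sq_abs a, sq_abs y]

theorem abs_div_sq_add_sq_le' (a : ℝ) {y : ℝ} (hy : y ≠ 0) : |y / (a ^ 2 + y ^ 2)| ≤ |y|⁻¹ := by
  have hd : 0 < a ^ 2 + y ^ 2 := by positivity
  rw [abs_div, abs_of_pos hd, div_le_iff₀ hd, inv_mul_eq_div, le_div_iff₀ (abs_pos.2 hy)]
  nlinarith [sq_nonneg a, sq_abs y]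

-- Unnormalised: the usual Poisson kernels carry an extra factor `1 / π`.
noncomputable def poissonIntegral (f : ℝ → ℝ) (x y : ℝ) : ℝ :=
  ∫ t, f t * (y / ((x - t) ^ 2 + y ^ 2))

noncomputable def conjPoissonIntegral (f : ℝ → ℝ) (x y : ℝ) : ℝ :=
  ∫ t, f t * ((x - t) / ((x - t) ^ 2 + y ^ 2))

theorem poissonIntegral_eq_integral_comp_add_mul (f : ℝ → ℝ) (x : ℝ) {y : ℝ} (hy : 0 < y) :
    poissonIntegral f x y = ∫ s, f (x + y * s) * (1 + s ^ 2)⁻¹ := by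
  set g : ℝ → ℝ := fun v => f (x + v) * (y / (v ^ 2 + y ^ 2))
  have hscale : ∀ s, g (y * s) = y⁻¹ * (f (x + y * s) * (1 + s ^ 2)⁻¹) := fun s => by
    simp only [g]
    field_simp
    ring
  calc poissonIntegral f x y = ∫ v, g v := by
        rw [poissonIntegral, ← integral_add_left_eq_self (μ := volume) _ x]
        simp only [g, sub_add_cancel_left, neg_sq]
    _ = y * ∫ s, g (y * s) := by
        rw [Measure.integral_comp_mul_left, abs_of_pos (inv_pos.2 hy), smul_eq_mul,
          mul_inv_cancel_left₀ hy.ne']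
    _ = ∫ s, f (x + y * s) * (1 + s ^ 2)⁻¹ := by
        simp_rw [hscale]
        rw [integral_const_mul, mul_inv_cancel_left₀ hy.ne']

theorem tendsto_integral_comp_add_mul_mul_inv_one_add_sq {f : ℝ → ℝ} (hf : Measurable f) {x : ℝ}
    (hfx : ContinuousAt f x) {C : ℝ} (hC : ∀ t, |f t| ≤ C) :
    Tendsto (fun y => ∫ s, f (x + y * s) * (1 + s ^ 2)⁻¹) (𝓝 0) (𝓝 (π * f x)) := by
  have hlim : ∫ s, f (x + 0 * s) * (1 + s ^ 2)⁻¹ = π * f x := by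
    simp [integral_const_mul, integral_univ_inv_one_add_sq, mul_comm]
  rw [← hlim]
  refine tendsto_integral_filter_of_dominated_convergence (fun s => C * (1 + s ^ 2)⁻¹)
    (Eventually.of_forall fun y => Measurable.aestronglyMeasurable (by fun_prop))
    (Eventually.of_forall fun y => Eventually.of_forall fun s => ?_)
    (integrable_inv_one_add_sq.const_mul C) (Eventually.of_forall fun s => ?_)
  · rw [norm_mul, Real.norm_eq_abs (f _), norm_of_nonneg (by positivity : (0 : ℝ) ≤ (1 + s ^ 2)⁻¹)]
    exact mul_le_mul_of_nonneg_right (hC _) (by positivity)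
  · have hcomp : ContinuousAt (fun y : ℝ => f (x + y * s)) 0 :=
      hfx.comp_of_eq (by fun_prop) (by simp)
    exact (hcomp.mul continuousAt_const).tendsto

theorem tendsto_poissonIntegral {f : ℝ → ℝ} (hf : Measurable f) {x : ℝ} (hfx : ContinuousAt f x)
    {C : ℝ} (hC : ∀ t, |f t| ≤ C) :
    Tendsto (poissonIntegral f x) (𝓝[>] 0) (𝓝 (π * f x)) := by
  refine ((tendsto_integral_comp_add_mul_mul_inv_one_add_sq hf hfx hC).mono_left
    nhdsWithin_le_nhds).congr' ?_
  filter_upwards [self_mem_nhdsWithin] with y hy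
  exact (poissonIntegral_eq_integral_comp_add_mul f x hy).symm

theorem conjPoissonIntegral_eq_half_integral {f : ℝ → ℝ} (hf : Integrable f) (x : ℝ) {y : ℝ}
    (hy : y ≠ 0) : conjPoissonIntegral f x y =
      (∫ u, (f (x - u) - f (x + u)) / u * (u ^ 2 / (u ^ 2 + y ^ 2))) / 2 := by
  have hk : ∀ u : ℝ, ‖u / (u ^ 2 + y ^ 2)‖ ≤ |y|⁻¹ := fun u => abs_div_sq_add_sq_le u hy
  have hminus : Integrable fun u => f (x - u) * (u / (u ^ 2 + y ^ 2)) :=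
    (hf.comp_sub_left x).mul_bdd (Measurable.aestronglyMeasurable (by fun_prop))
      (Eventually.of_forall hk)
  have hplus : Integrable fun u => f (x + u) * (u / (u ^ 2 + y ^ 2)) :=
    (hf.comp_add_left x).mul_bdd (Measurable.aestronglyMeasurable (by fun_prop))
      (Eventually.of_forall hk)
  have hsub : conjPoissonIntegral f x y = ∫ u, f (x - u) * (u / (u ^ 2 + y ^ 2)) := by
    rw [conjPoissonIntegral, ← integral_sub_left_eq_self (μ := volume) _ x]
    simp only [sub_sub_cancel]
  -- the kernel is odd, so reflecting `u ↦ -u` turns `f (x - u)` into `-f (x + u)`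
  have hneg : ∫ u, f (x - u) * (u / (u ^ 2 + y ^ 2)) =
      -∫ u, f (x + u) * (u / (u ^ 2 + y ^ 2)) := by
    rw [← integral_neg, ← integral_neg_eq_self]
    simp [neg_div]
  have hpoint : ∀ u : ℝ, (f (x - u) - f (x + u)) / u * (u ^ 2 / (u ^ 2 + y ^ 2)) =
      f (x - u) * (u / (u ^ 2 + y ^ 2)) - f (x + u) * (u / (u ^ 2 + y ^ 2)) := fun u => by
    rcases eq_or_ne u 0 with rfl | hu
    · simp
    field_simp
  simp_rw [hpoint]
  rw [integral_sub hminus hplus, hsub, hneg]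
  ring

theorem tendsto_integral_mul_sq_div_sq_add_sq {h : ℝ → ℝ} (hh : Integrable h) :
    Tendsto (fun y => ∫ u, h u * (u ^ 2 / (u ^ 2 + y ^ 2))) (𝓝 0) (𝓝 (∫ u, h u)) := by
  refine tendsto_integral_filter_of_dominated_convergence (fun u => ‖h u‖)
    (Eventually.of_forall fun y => hh.aestronglyMeasurable.mul
      (Measurable.aestronglyMeasurable (by fun_prop)))
    (Eventually.of_forall fun y => Eventually.of_forall fun u => ?_) hh.norm ?_
  · rw [norm_mul, Real.norm_eq_abs (_ / _), abs_of_nonneg (by positivity)]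
    exact mul_le_of_le_one_right (norm_nonneg _)
      (div_le_one_of_le₀ (le_add_of_nonneg_right (sq_nonneg y)) (by positivity))
  · filter_upwards [Measure.ae_ne volume 0] with u hu
    have hc : ContinuousAt (fun y => h u * (u ^ 2 / (u ^ 2 + y ^ 2))) 0 :=
      continuousAt_const.mul (continuousAt_const.div (by fun_prop) (by simpa using hu))
    simpa [hu] using hc.tendsto

theorem tendsto_conjPoissonIntegral {f : ℝ → ℝ} (hf : Integrable f) (x : ℝ)
    (hodd : Integrable fun u => (f (x - u) - f (x + u)) / u) :
    Tendsto (conjPoissonIntegral f x) (𝓝[≠] 0)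
      (𝓝 ((∫ u, (f (x - u) - f (x + u)) / u) / 2)) := by
  refine (((tendsto_integral_mul_sq_div_sq_add_sq hodd).mono_left nhdsWithin_le_nhds).div_const
    2).congr' ?_
  filter_upwards [self_mem_nhdsWithin] with y hy
  exact (conjPoissonIntegral_eq_half_integral hf x hy).symm

open Complex in
theorem ofReal_div_ofReal_add_I_mul (c a y : ℝ) : (c : ℂ) / (a + I * y) =
    ((c * (a / (a ^ 2 + y ^ 2)) : ℝ) : ℂ) - I * ((c * (y / (a ^ 2 + y ^ 2)) : ℝ) : ℂ) := by
  simp only [Complex.ext_iff, div_re, div_im, sub_re, sub_im, mul_re, mul_im, ofReal_re,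
    ofReal_im, add_re, add_im, I_re, I_im, mul_comm I, normSq_add_mul_I]
  constructor <;> ring

open Complex in
theorem integral_ofReal_div_add_I_mul_sub {f : ℝ → ℝ} (hf : Integrable f) (x : ℝ) {y : ℝ}
    (hy : y ≠ 0) : ∫ t, (f t : ℂ) / ((x + I * y) - t) =
      conjPoissonIntegral f x y - I * poissonIntegral f x y := by
  have hconj : Integrable fun t => ((f t * ((x - t) / ((x - t) ^ 2 + y ^ 2)) : ℝ) : ℂ) :=
    (hf.mul_bdd (Measurable.aestronglyMeasurable (by fun_prop))
      (Eventually.of_forall fun t => abs_div_sq_add_sq_le (x - t) hy)).ofReal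
  have hpoisson : Integrable fun t => I * ((f t * (y / ((x - t) ^ 2 + y ^ 2)) : ℝ) : ℂ) :=
    ((hf.mul_bdd (Measurable.aestronglyMeasurable (by fun_prop))
      (Eventually.of_forall fun t => abs_div_sq_add_sq_le' (x - t) hy)).ofReal).const_mul I
  have hsplit : ∀ t : ℝ, (f t : ℂ) / ((x + I * y) - t) =
      ((f t * ((x - t) / ((x - t) ^ 2 + y ^ 2)) : ℝ) : ℂ) -
        I * ((f t * (y / ((x - t) ^ 2 + y ^ 2)) : ℝ) : ℂ) := fun t => by
    rw [← ofReal_div_ofReal_add_I_mul]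
    push_cast
    ring_nf
  simp_rw [hsplit]
  rw [integral_sub hconj hpoisson, integral_const_mul, integral_complex_ofReal,
    integral_complex_ofReal, conjPoissonIntegral, poissonIntegral]

/-- For every real `x`, the complex probability function
`W(x,y) = (i/π) ∫_{−∞}^{∞} e^{−t²}/((x + iy) − t) dt` tends, as `y → 0⁺`, to
`e^{−x²} + (2i/√π)·daw(x)`. -/
theorem complex_probability_tendsto_dawson (x : ℝ) :
    Tendsto
      (fun y : ℝ => (Complex.I / (Real.pi : ℂ)) *
        ∫ t : ℝ, Complex.exp (-(t : ℂ) ^ 2) /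
          (((x : ℂ) + Complex.I * (y : ℂ)) - (t : ℂ)))
      (nhdsWithin 0 (Set.Ioi 0))
      (nhds ((Real.exp (-x ^ 2) : ℂ) +
        (2 * Complex.I / (Real.sqrt Real.pi : ℂ)) * (dawson x : ℂ))) := by
  have hconj := (tendsto_conjPoissonIntegral integrable_exp_neg_sq x
    (integrable_exp_neg_sq_sub_sub_exp_neg_sq_add_div x)).mono_left (nhdsGT_le_nhdsNE 0)
  rw [integral_exp_neg_sq_sub_sub_exp_neg_sq_add_div] at hconj
  have hpoisson := tendsto_poissonIntegral (f := fun t => exp (-t ^ 2)) (x := x) (by fun_prop)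
    (by fun_prop) (C := 1) fun t => by
      rw [abs_of_pos (exp_pos _), exp_le_one_iff, neg_nonpos]; positivity
  convert ((((Complex.continuous_ofReal.tendsto _).comp hconj).sub
    (((Complex.continuous_ofReal.tendsto _).comp hpoisson).const_mul Complex.I)).const_mul
    (Complex.I / π)).congr' ?_ using 2
  · have hsqrt : ((√π : ℝ) : ℂ) ≠ 0 := Complex.ofReal_ne_zero.2 (sqrt_ne_zero'.2 pi_pos)
    have hpi : (π : ℂ) = ((√π : ℝ) : ℂ) ^ 2 := by rw [← Complex.ofReal_pow, sq_sqrt pi_pos.le]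
    generalize exp (-x ^ 2) = e
    push_cast
    rw [hpi]
    field_simp
    linear_combination (2 * (e : ℂ) * ((√π : ℝ) : ℂ)) * Complex.I_sq
  filter_upwards [self_mem_nhdsWithin] with y (hy : 0 < y)
  rw [Function.comp_apply, Function.comp_apply,
    ← integral_ofReal_div_add_I_mul_sub integrable_exp_neg_sq x hy.ne']
  simp [Complex.ofReal_exp]
end

section
/- For every complex z, the Fresnel integral satisfies F_r(z) := ∫₀^z e^{i(π/2)t²} dt = (1 + i)[1 − e^{i(π/2)z²} w(√π (1 + i) z / 2)] / 2, where w is the complex error function. -/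
open Real MeasureTheory

/-! With `a = √π (1 + i) z / 2` one has `a² = i (π/2) z²`, so the Fresnel integral along
`[0, z]` is `(z / a) ∫₀^a e^{t²} dt`, while `e^{a²} w(a) = 1 + (2i/√π) ∫₀^a e^{t²} dt`.
Eliminating the integral leaves the identity `(1 + i)² = 2i`. -/

lemma Complex.ofReal_sqrt_pi_sq : ((√π : ℝ) : ℂ) ^ 2 = π := by
  exact_mod_cast Real.sq_sqrt Real.pi_pos.le

lemma Complex.ofReal_sqrt_pi_ne_zero : ((√π : ℝ) : ℂ) ≠ 0 := by
  exact_mod_cast (Real.sqrt_pos.mpr Real.pi_pos).ne'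

lemma sq_sqrt_pi_mul_one_add_I_mul_div_two (z : ℂ) :
    ((√π : ℂ) * (1 + Complex.I) * z / 2) ^ 2 = Complex.I * (π / 2 : ℝ) * z ^ 2 := by
  push_cast
  linear_combination (Complex.I * z ^ 2 / 2) * Complex.ofReal_sqrt_pi_sq +
    ((√π : ℂ) ^ 2 * z ^ 2 / 4) * Complex.I_sq

lemma exp_sq_mul_faddeeva (z : ℂ) :
    Complex.exp (z ^ 2) * faddeeva z =
      1 + 2 * Complex.I / (√π : ℂ) * (z * ∫ s in (0:ℝ)..1, Complex.exp (((s : ℂ) * z) ^ 2)) := by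
  rw [faddeeva, ← mul_assoc, ← Complex.exp_add, add_neg_cancel, Complex.exp_zero, one_mul]

/-- For every complex `z`, the Fresnel integral
`F_r(z) := ∫₀^z e^{i(π/2)t²} dt` (along the straight-line segment from `0` to `z`)
satisfies `F_r(z) = (1 + i)[1 − e^{i(π/2)z²} w(√π (1 + i) z / 2)] / 2`. -/
theorem fresnel_eq_faddeeva (z : ℂ) :
    (z * ∫ s in (0:ℝ)..1,
        Complex.exp (Complex.I * (Real.pi / 2 : ℝ) * ((s : ℂ) * z) ^ 2)) =
      (1 + Complex.I) *
        (1 - Complex.exp (Complex.I * (Real.pi / 2 : ℝ) * z ^ 2) *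
          faddeeva ((Real.sqrt Real.pi : ℂ) * (1 + Complex.I) * z / 2)) / 2 := by
  set a : ℂ := (√π : ℂ) * (1 + Complex.I) * z / 2 with ha
  have ha_sq : a ^ 2 = Complex.I * (π / 2 : ℝ) * z ^ 2 :=
    sq_sqrt_pi_mul_one_add_I_mul_div_two z
  have integrand_eq (s : ℝ) :
      Complex.I * (π / 2 : ℝ) * ((s : ℂ) * z) ^ 2 = ((s : ℂ) * a) ^ 2 := by
    rw [mul_pow, mul_pow, ha_sq]
    ring
  simp only [integrand_eq, ← ha_sq, exp_sq_mul_faddeeva]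
  set J := ∫ s in (0:ℝ)..1, Complex.exp (((s : ℂ) * a) ^ 2)
  rw [ha]
  field_simp [Complex.ofReal_sqrt_pi_ne_zero]
  linear_combination z * J * (2 + Complex.I) * Complex.I_sq
end

section
/- Let h > 0, σ > 0 and N be a positive integer, and let z = x + iy with x real and y ≥ 0. Set A_n = 8πh²n e^{σ² − (2πhn)²} sin(4πhnσ), B_n = 4h e^{σ² − (2πhn)²} cos(4πhnσ), and C_n = 2πhn for n = 1,…,N. Then (1/√π) ∫₀^{∞} 2√π h e^{σ²} [1 + 2 Σ_{n=1}^{N} e^{−(2πhn)²} cos(2πhn(t − 2σ))] e^{−(y+σ)t} e^{ixt} dt = i·2h e^{σ²}/(z + iσ) + Σ_{n=1}^{N} (A_n − i(z + iσ)B_n)/(C_n² − (z + iσ)²). -/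
/-!
Put `w = z + iσ`, so that `Im w = y + σ > 0` and the damping factor `e^{-(y+σ)t} e^{ixt}` is
`e^{iwt}`. Splitting `cos (a (t - s))` into two exponentials reduces everything to the Laplace
transforms `∫₀^∞ e^{i(w ± a)t} dt = i / (w ± a)`; recombining the two of them gives
`(a sin (a s) - i w cos (a s)) / (a² - w²)`, which with `a = C_n`, `s = 2σ` is the `n`-th term.
-/

open Real MeasureTheory Finset Complex

lemma integrableOn_cexp_I_mul_Ioi {w : ℂ} (hw : 0 < w.im) :
    IntegrableOn (fun t : ℝ => cexp (I * w * t)) (Set.Ioi 0) :=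
  integrableOn_exp_mul_complex_Ioi (by simpa using hw) 0

lemma integral_cexp_I_mul_Ioi {w : ℂ} (hw : 0 < w.im) :
    ∫ t in Set.Ioi (0 : ℝ), cexp (I * w * t) = I / w := by
  have hw0 : w ≠ 0 := by rintro rfl; simp at hw
  rw [integral_exp_mul_complex_Ioi (by simpa using hw) 0]
  field_simp
  simp

lemma ofReal_cos_mul_cexp_I_mul (a s t : ℝ) (w : ℂ) :
    (Real.cos (a * (t - s)) : ℂ) * cexp (I * w * t) =
      (cexp (-(a * s) * I) * cexp (I * (w + a) * t) +
        cexp (a * s * I) * cexp (I * (w - a) * t)) / 2 := by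
  simp only [← Complex.exp_add]
  rw [ofReal_cos, Complex.cos, add_div, add_mul, div_mul_eq_mul_div, div_mul_eq_mul_div,
    ← Complex.exp_add, ← Complex.exp_add]
  push_cast
  ring_nf

lemma cexp_neg_ofReal_mul_mul_cexp_I_mul (x y t : ℝ) :
    cexp (-(y : ℂ) * t) * cexp (I * x * t) = cexp (I * (x + I * y) * t) := by
  rw [← Complex.exp_add]
  congr 1
  linear_combination (-(y : ℂ) * t) * I_sq

section CosineLaplace

variable {w : ℂ} (hw : 0 < w.im)
include hw

lemma integrableOn_ofReal_cos_mul_cexp_I_mul_Ioi (a s : ℝ) :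
    IntegrableOn (fun t : ℝ => (Real.cos (a * (t - s)) : ℂ) * cexp (I * w * t))
      (Set.Ioi 0) := by
  simp_rw [ofReal_cos_mul_cexp_I_mul]
  exact (((integrableOn_cexp_I_mul_Ioi (by simpa using hw)).const_mul _).add
    ((integrableOn_cexp_I_mul_Ioi (by simpa using hw)).const_mul _)).div_const _

lemma integral_ofReal_cos_mul_cexp_I_mul_Ioi (a s : ℝ) :
    ∫ t in Set.Ioi (0 : ℝ), (Real.cos (a * (t - s)) : ℂ) * cexp (I * w * t) =
      (a * Real.sin (a * s) - I * w * Real.cos (a * s)) / (a ^ 2 - w ^ 2) := by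
  have hplus : 0 < (w + a).im := by simpa using hw
  have hminus : 0 < (w - a).im := by simpa using hw
  have hplus0 : w + a ≠ 0 := by rintro h; simp [h] at hplus
  have hminus0 : w - a ≠ 0 := by rintro h; simp [h] at hminus
  simp_rw [ofReal_cos_mul_cexp_I_mul]
  rw [integral_div, integral_add ((integrableOn_cexp_I_mul_Ioi hplus).const_mul _)
      ((integrableOn_cexp_I_mul_Ioi hminus).const_mul _),
    integral_const_mul, integral_const_mul, integral_cexp_I_mul_Ioi hplus,
    integral_cexp_I_mul_Ioi hminus, Complex.exp_mul_I, Complex.exp_mul_I, Complex.cos_neg,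
    Complex.sin_neg, show (a : ℂ) ^ 2 - w ^ 2 = -((w + a) * (w - a)) by ring]
  push_cast
  field_simp
  linear_combination (2 * a * Complex.sin (a * s)) * I_sq

lemma integral_one_add_two_cosine_sum_mul_cexp_I_mul_Ioi {ι : Type*} (S : Finset ι)
    (b a : ι → ℝ) (s : ℝ) :
    ∫ t in Set.Ioi (0 : ℝ),
        ((1 + 2 * ∑ i ∈ S, b i * Real.cos (a i * (t - s)) : ℝ) : ℂ) * cexp (I * w * t) =
      I / w + 2 * ∑ i ∈ S, b i *
        ((a i * Real.sin (a i * s) - I * w * Real.cos (a i * s)) / (a i ^ 2 - w ^ 2)) := by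
  have hterm (i : ι) : IntegrableOn
      (fun t : ℝ => (b i : ℂ) * ((Real.cos (a i * (t - s)) : ℂ) * cexp (I * w * t))) (Set.Ioi 0) :=
    (integrableOn_ofReal_cos_mul_cexp_I_mul_Ioi hw _ _).const_mul _
  simp only [ofReal_add, ofReal_one, ofReal_mul, ofReal_ofNat, ofReal_sum, add_mul, one_mul,
    mul_assoc (2 : ℂ), Finset.sum_mul, mul_assoc (b _ : ℂ)]
  rw [integral_add (integrableOn_cexp_I_mul_Ioi hw)
      ((integrable_finsetSum _ fun i _ => hterm i).const_mul 2),
    integral_const_mul, integral_finsetSum _ fun i _ => hterm i, integral_cexp_I_mul_Ioi hw]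
  simp only [integral_const_mul, integral_ofReal_cos_mul_cexp_I_mul_Ioi hw]

end CosineLaplace

theorem rational_approximation_integral_general
    (h σ : ℝ) (hσ : 0 < σ) (N : ℕ)
    (x y : ℝ) (hy : 0 ≤ y) (z : ℂ) (hz : z = (x : ℂ) + Complex.I * (y : ℂ))
    (A B C : ℕ → ℝ)
    (hA : ∀ n : ℕ, A n = 8 * Real.pi * h ^ 2 * n *
      Real.exp (σ ^ 2 - (2 * Real.pi * h * n) ^ 2) *
      Real.sin (4 * Real.pi * h * n * σ))
    (hB : ∀ n : ℕ, B n = 4 * h *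
      Real.exp (σ ^ 2 - (2 * Real.pi * h * n) ^ 2) *
      Real.cos (4 * Real.pi * h * n * σ))
    (hC : ∀ n : ℕ, C n = 2 * Real.pi * h * n) :
    (1 / (Real.sqrt Real.pi : ℂ)) *
        ∫ t in Set.Ioi (0:ℝ),
          ((2 * Real.sqrt Real.pi * h * Real.exp (σ ^ 2) : ℝ) : ℂ) *
            ((1 + 2 * ∑ n ∈ Finset.Icc 1 N,
              Real.exp (-(2 * Real.pi * h * n) ^ 2) *
                Real.cos (2 * Real.pi * h * n * (t - 2 * σ)) : ℝ) : ℂ) *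
            Complex.exp (-((y + σ : ℝ) : ℂ) * (t : ℂ)) *
            Complex.exp (Complex.I * (x : ℂ) * (t : ℂ)) =
      Complex.I * ((2 * h * Real.exp (σ ^ 2) : ℝ) : ℂ) /
          (z + Complex.I * (σ : ℂ)) +
        ∑ n ∈ Finset.Icc 1 N,
          ((A n : ℂ) - Complex.I * (z + Complex.I * (σ : ℂ)) * (B n : ℂ)) /
            ((C n : ℂ) ^ 2 - (z + Complex.I * (σ : ℂ)) ^ 2) := by
  set w := z + I * σ
  have hw : 0 < w.im := by simpa [w, hz] using add_pos_of_nonneg_of_pos hy hσ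
  have hsqrt : (Real.sqrt Real.pi : ℂ) ≠ 0 := by
    exact_mod_cast (Real.sqrt_pos.2 Real.pi_pos).ne'
  have hdamping : (x : ℂ) + I * ((y + σ : ℝ) : ℂ) = w := by simp only [w, hz]; push_cast; ring
  have hconst : ((2 * √π * h * Real.exp (σ ^ 2) : ℝ) : ℂ) =
      √π * ((2 * h * Real.exp (σ ^ 2) : ℝ) : ℂ) := by
    push_cast; ring
  rw [← integral_const_mul]
  simp_rw [mul_assoc _ (cexp _) (cexp _), cexp_neg_ofReal_mul_mul_cexp_I_mul, hdamping, hconst,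
    mul_assoc (√π : ℂ), one_div, inv_mul_cancel_left₀ hsqrt, mul_assoc ((2 * h * _ : ℝ) : ℂ)]
  rw [integral_const_mul, integral_one_add_two_cosine_sum_mul_cexp_I_mul_Ioi hw, mul_add,
    Finset.mul_sum, Finset.mul_sum]
  congr 1
  · ring
  refine Finset.sum_congr rfl fun n _ => ?_
  rw [hA, hB, hC, Real.exp_sub, Real.exp_neg,
    show 2 * Real.pi * h * n * (2 * σ) = 4 * Real.pi * h * n * σ by ring]
  push_cast
  ring

/-- With `h > 0`, `σ > 0`, a positive integer `N`, `z = x + iy` (`y ≥ 0`), and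
coefficients `A_n = 8πh²n e^{σ² − (2πhn)²} sin(4πhnσ)`,
`B_n = 4h e^{σ² − (2πhn)²} cos(4πhnσ)`, `C_n = 2πhn`, one has
`(1/√π) ∫₀^{∞} 2√π h e^{σ²} [1 + 2 Σ_{n=1}^{N} e^{−(2πhn)²} cos(2πhn(t − 2σ))]
 e^{−(y+σ)t} e^{ixt} dt
 = i·2h e^{σ²}/(z + iσ) + Σ_{n=1}^{N} (A_n − i(z + iσ)B_n)/(C_n² − (z + iσ)²)`. -/
theorem rational_approximation_integral
    (h σ : ℝ) (hh : 0 < h) (hσ : 0 < σ) (N : ℕ) (hN : 0 < N)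
    (x y : ℝ) (hy : 0 ≤ y) (z : ℂ) (hz : z = (x : ℂ) + Complex.I * (y : ℂ))
    (A B C : ℕ → ℝ)
    (hA : ∀ n : ℕ, A n = 8 * Real.pi * h ^ 2 * n *
      Real.exp (σ ^ 2 - (2 * Real.pi * h * n) ^ 2) *
      Real.sin (4 * Real.pi * h * n * σ))
    (hB : ∀ n : ℕ, B n = 4 * h *
      Real.exp (σ ^ 2 - (2 * Real.pi * h * n) ^ 2) *
      Real.cos (4 * Real.pi * h * n * σ))
    (hC : ∀ n : ℕ, C n = 2 * Real.pi * h * n) :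
    (1 / (Real.sqrt Real.pi : ℂ)) *
        ∫ t in Set.Ioi (0:ℝ),
          ((2 * Real.sqrt Real.pi * h * Real.exp (σ ^ 2) : ℝ) : ℂ) *
            ((1 + 2 * ∑ n ∈ Finset.Icc 1 N,
              Real.exp (-(2 * Real.pi * h * n) ^ 2) *
                Real.cos (2 * Real.pi * h * n * (t - 2 * σ)) : ℝ) : ℂ) *
            Complex.exp (-((y + σ : ℝ) : ℂ) * (t : ℂ)) *
            Complex.exp (Complex.I * (x : ℂ) * (t : ℂ)) =
      Complex.I * ((2 * h * Real.exp (σ ^ 2) : ℝ) : ℂ) /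
          (z + Complex.I * (σ : ℂ)) +
        ∑ n ∈ Finset.Icc 1 N,
          ((A n : ℂ) - Complex.I * (z + Complex.I * (σ : ℂ)) * (B n : ℂ)) /
            ((C n : ℂ) ^ 2 - (z + Complex.I * (σ : ℂ)) ^ 2) :=
  rational_approximation_integral_general h σ hσ N x y hy z hz A B C hA hB hC
end
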